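/- arXiv:1704.02427 — 3 statements merged into one kernel-verified Lean document; each statement's English description precedes it below -/
import Mathlib

section
/- With the sets X_i, Y_i defined as above from pairwise distinct S_i, for any m ∈ ℕ and I = {m, m+1, …, m+2p+1}: if i ≠ j then X_i ∩ Y_j ∩ I ≠ ∅. -/
/-- `X_i = { s + m·(2p+2) : m ∈ ℕ, s ∈ S_i ∪ {2p} }`. -/
def Xset (p : ℕ) (S : Finset ℕ) : Set ℕ :=
  {t | ∃ s ∈ S ∪ {2 * p}, ∃ m : ℕ, t = s + m * (2 * p + 2)}

/-- `Y_i = ℕ \ X_i`. -/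
def Yset (p : ℕ) (S : Finset ℕ) : Set ℕ := (Xset p S)ᶜ

/-- For distinct `S_i, S_j` and any interval `I = {m,…,m+2p+1}` of `2p+2`
consecutive naturals, `X_i ∩ Y_j ∩ I ≠ ∅`. -/
theorem stmt_4 (p : ℕ) (hp : 1 ≤ p) (Si Sj : Finset ℕ)
    (hSi : Si ⊆ Finset.range (2 * p)) (hSj : Sj ⊆ Finset.range (2 * p))
    (hci : Si.card = p) (hcj : Sj.card = p) (hne : Si ≠ Sj) (m : ℕ) :
    ∃ t, t ∈ Xset p Si ∧ t ∈ Yset p Sj ∧ m ≤ t ∧ t ≤ m + 2 * p + 1 := by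
  -- find s ∈ Si \ Sj
  obtain ⟨s, hsSi, hsSj⟩ : ∃ s ∈ Si, s ∉ Sj := by
    by_contra h
    push_neg at h
    exact hne (Finset.eq_of_subset_of_card_le h (by omega))
  set k := 2 * p + 2 with hk
  have hslt : s < 2 * p := Finset.mem_range.mp (hSi hsSi)
  have hkpos : 0 < k := by omega
  set q := (m + k - 1 - s) / k with hq
  refine ⟨s + q * k, ?_, ?_, ?_, ?_⟩
  · exact ⟨s, Finset.mem_union_left _ hsSi, q, rfl⟩
  · rintro ⟨s', hs', m', hEq⟩
    have hs'lt : s' < k := by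
      rcases Finset.mem_union.mp hs' with h | h
      · have := Finset.mem_range.mp (hSj h); omega
      · simp at h; omega
    have h1 : (s + q * k) % k = s := by
      rw [Nat.add_mul_mod_self_right]; exact Nat.mod_eq_of_lt (by omega)
    have h2 : (s' + m' * k) % k = s' := by
      rw [Nat.add_mul_mod_self_right]; exact Nat.mod_eq_of_lt hs'lt
    have : s = s' := by rw [← h1, hEq, h2]
    subst this
    rcases Finset.mem_union.mp hs' with h | h
    · exact hsSj h
    · simp at h; omega
  · have h1 : (m + k - 1 - s) % k < k := Nat.mod_lt _ hkpos
    have h2 : q * k + (m + k - 1 - s) % k = m + k - 1 - s := by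
      rw [mul_comm]; exact Nat.div_add_mod _ _
    omega
  · have h2 : q * k ≤ m + k - 1 - s := by
      exact Nat.div_mul_le_self _ _
    omega
end

section
/- Summary of the label-intersection property: with X_i, Y_i as above from pairwise distinct S_i, for any m ∈ ℕ and I = {m,…,m+2p+1}, the set X_i ∩ Y_j ∩ I is nonempty if and only if i ≠ j. -/
lemma exists_k (p s m : ℕ) (hs : s ≤ 2 * p + 1) :
    ∃ k, m ≤ s + k * (2 * p + 2) ∧ s + k * (2 * p + 2) ≤ m + 2 * p + 1 := by
  induction m with
  | zero => exact ⟨0, by omega⟩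
  | succ n ih =>
    obtain ⟨k, hk1, hk2⟩ := ih
    by_cases h : n + 1 ≤ s + k * (2 * p + 2)
    · exact ⟨k, h, by omega⟩
    · refine ⟨k + 1, ?_, ?_⟩ <;>
      · have : (k + 1) * (2 * p + 2) = k * (2 * p + 2) + (2 * p + 2) := by ring
        omega

/-- Label-intersection property: for `p`-element subsets `S_i, S_j` of
`{0,…,2p−1}` and any interval `I = {m,…,m+2p+1}`, the set `X_i ∩ Y_j ∩ I`
is nonempty if and only if `S_i ≠ S_j`. -/
theorem stmt_7 (p : ℕ) (hp : 1 ≤ p) (Si Sj : Finset ℕ)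
    (hSi : Si ⊆ Finset.range (2 * p)) (hSj : Sj ⊆ Finset.range (2 * p))
    (hci : Si.card = p) (hcj : Sj.card = p) (m : ℕ) :
    (∃ t, t ∈ Xset p Si ∧ t ∈ Yset p Sj ∧ m ≤ t ∧ t ≤ m + 2 * p + 1) ↔
      Si ≠ Sj := by
  constructor
  · rintro ⟨t, htX, htY, -⟩ rfl
    exact htY htX
  · intro hne
    have hss : ¬ Si ⊆ Sj := fun h =>
      hne (Finset.eq_of_subset_of_card_le h (by omega))
    obtain ⟨s, hsSi, hsSj⟩ := Finset.not_subset.mp hss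
    have hs2p : s < 2 * p := Finset.mem_range.mp (hSi hsSi)
    obtain ⟨k, hk1, hk2⟩ := exists_k p s m (by omega)
    refine ⟨s + k * (2 * p + 2), ⟨s, by simp [hsSi], k, rfl⟩, ?_, hk1, hk2⟩
    rintro ⟨s', hs', m', heq⟩
    have hs'lt : s' < 2 * p + 2 := by
      rcases Finset.mem_union.mp hs' with h | h
      · have := Finset.mem_range.mp (hSj h); omega
      · simp at h; omega
    have h1 : (s + k * (2 * p + 2)) % (2 * p + 2) = s % (2 * p + 2) :=
      Nat.add_mul_mod_self_right s k (2 * p + 2)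
    have h2 : (s' + m' * (2 * p + 2)) % (2 * p + 2) = s' % (2 * p + 2) :=
      Nat.add_mul_mod_self_right s' m' (2 * p + 2)
    have hss' : s = s' := by
      rw [heq, h2, Nat.mod_eq_of_lt hs'lt] at h1
      rw [Nat.mod_eq_of_lt (by omega)] at h1
      exact h1.symm
    subst hss'
    rcases Finset.mem_union.mp hs' with h | h
    · exact hsSj h
    · simp at h; omega
end

section
/- Let d : Fin k → ℕ₊ be the cyclic inter-distance sequence of a configuration with Σ d_i = n, and suppose there exist indices i ≠ j such that the clockwise sequence starting at i equals the counterclockwise sequence starting at j and both equal the lexicographic minimum (a double-palindrome configuration). Then the configuration has an axis of symmetry: the reflection of ℤ/nℤ that exchanges homebase i and homebase j maps the set of homebase positions to itself. -/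
/-- Double-palindrome configurations have an axis of symmetry: if the clockwise
inter-distance sequence starting at homebase `i` equals the counterclockwise
one starting at homebase `j ≠ i`, then some reflection `x ↦ a − x` of `ZMod n`
maps the set of homebase positions to itself and exchanges `h i` and `h j`. -/
theorem stmt_11 (n k : ℕ) (hn : 0 < n) (hk : 0 < k)
    (h : ZMod k → ZMod n) (d : ZMod k → ZMod n)
    (hd : ∀ m, d m = h (m + 1) - h m)
    (i j : ZMod k) (hij : i ≠ j)
    (hpal : ∀ m : ℕ, d (i + (m : ZMod k)) = d (j - 1 - (m : ZMod k))) :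
    ∃ a : ZMod n,
      (fun x => a - x) '' Set.range h = Set.range h ∧
      a - h i = h j ∧ a - h j = h i := by
  haveI : NeZero k := ⟨hk.ne'⟩
  refine ⟨h i + h j, ?_, by ring, by ring⟩
  have key : ∀ m : ℕ, h (i + (m : ZMod k)) + h (j - (m : ZMod k)) = h i + h j := by
    intro m
    induction m with
    | zero => simp
    | succ m ih =>
      have h1 : h (i + (m : ZMod k) + 1) = h (i + (m : ZMod k)) + d (i + (m : ZMod k)) := by
        have := hd (i + (m : ZMod k)); linear_combination -this
      have h2 : h (j - (m : ZMod k)) = h (j - 1 - (m : ZMod k)) + d (j - 1 - (m : ZMod k)) := by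
        have := hd (j - 1 - (m : ZMod k))
        have e : j - 1 - (m : ZMod k) + 1 = j - (m : ZMod k) := by ring
        rw [e] at this; linear_combination -this
      have e1 : i + ((m + 1 : ℕ) : ZMod k) = i + (m : ZMod k) + 1 := by push_cast; ring
      have e2 : j - ((m + 1 : ℕ) : ZMod k) = j - 1 - (m : ZMod k) := by push_cast; ring
      rw [e1, e2, h1, hpal m]
      linear_combination ih - h2
  have key' : ∀ x : ZMod k, h x + h (j - (x - i)) = h i + h j := by
    intro x
    have hx : ((x - i).val : ZMod k) = x - i := by
      simp [ZMod.natCast_val, ZMod.cast_id]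
    have := key (x - i).val
    rwa [hx, add_sub_cancel] at this
  ext y
  constructor
  · rintro ⟨-, ⟨x, rfl⟩, rfl⟩
    exact ⟨j - (x - i), by linear_combination (key' x)⟩
  · rintro ⟨x, rfl⟩
    exact ⟨h (j - (x - i)), ⟨j - (x - i), rfl⟩, by linear_combination -key' x⟩
end
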